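/- Let ν > 0, t > 0, and define, for u with 0 < 2νu < t, P(u) = 2 − 2Φ(u/√(t − 2νu)), and P(u) = 0 for 2νu ≥ t. Then ∫₀^∞ P(u) du = 2 ∫₀^∞ (y√(ν²y² + t) − νy²) φ(y) dy, where φ is the standard Gaussian density and Φ the standard Gaussian CDF. -/

import Mathlib

open MeasureTheory Real

/-- The standard Gaussian density. -/
noncomputable def stdGaussianPDF (y : ℝ) : ℝ :=
  (Real.sqrt (2 * Real.pi))⁻¹ * Real.exp (-y ^ 2 / 2)

/-- The standard Gaussian cumulative distribution function. -/
noncomputable def stdGaussianCDF (x : ℝ) : ℝ :=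
  ∫ y in Set.Iic x, stdGaussianPDF y

/-! For `u ≥ 0` and `y > 0` one has `2νu < t ∧ u / √(t - 2νu) < y ↔ u < h y`, where
`h y = y √(ν²y² + t) - νy²` solves `y = u / √(t - 2νu)` for `u`. Hence the integrand is
`2 γ₊ {h > u}` for the standard Gaussian `γ₊` restricted to `(0, ∞)`, and the layer-cake formula
`∫₀^∞ γ₊ {h > u} du = ∫ h dγ₊` gives the right-hand side. -/

open ProbabilityTheory Set

lemma stdGaussianPDF_eq_gaussianPDFReal : stdGaussianPDF = gaussianPDFReal 0 1 := by
  ext y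
  simp [stdGaussianPDF, gaussianPDFReal]

lemma stdGaussianCDF_eq_measureReal (x : ℝ) :
    stdGaussianCDF x = (gaussianReal 0 1).real (Iic x) := by
  have pdf_nonneg (y : ℝ) (_ : y ∈ Iic x) : 0 ≤ gaussianPDFReal 0 1 y :=
    gaussianPDFReal_nonneg _ _ y
  rw [measureReal_def, gaussianReal_apply_eq_integral _ one_ne_zero,
    ENNReal.toReal_ofReal (setIntegral_nonneg measurableSet_Iic pdf_nonneg),
    stdGaussianCDF, stdGaussianPDF_eq_gaussianPDFReal]

lemma one_sub_stdGaussianCDF (x : ℝ) : 1 - stdGaussianCDF x = (gaussianReal 0 1).real (Ioi x) := by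
  rw [stdGaussianCDF_eq_measureReal, ← compl_Iic, probReal_compl_eq_one_sub measurableSet_Iic]

lemma setIntegral_gaussianReal (μ : ℝ) {v : NNReal} (hv : v ≠ 0) {s : Set ℝ} (hs : MeasurableSet s)
    (f : ℝ → ℝ) :
    ∫ x in s, f x ∂gaussianReal μ v = ∫ x in s, gaussianPDFReal μ v x * f x := by
  rw [gaussianReal_of_var_ne_zero _ hv, restrict_withDensity hs,
    integral_withDensity_eq_integral_toReal_smul (measurable_gaussianPDF _ _)
      (ae_of_all _ fun _ ↦ gaussianPDF_lt_top)]
  simp [toReal_gaussianPDF]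

/-- Unlike `Integrable.integral_eq_integral_meas_lt`, no integrability is needed: for a finite
measure both sides are junk `0` exactly when `∫⁻ f = ∞`. -/
lemma integral_eq_integral_measureReal_lt {α : Type*} [MeasurableSpace α] {μ : Measure α}
    [IsFiniteMeasure μ] {f : α → ℝ} (f_nn : 0 ≤ᵐ[μ] f) (f_mble : AEMeasurable f μ) :
    ∫ ω, f ω ∂μ = ∫ t in Ioi 0, μ.real {a | t < f a} := by
  have meas_antitone : Antitone fun t : ℝ ↦ μ {a | t < f a} :=
    fun _ _ hst ↦ measure_mono fun _ h ↦ lt_of_le_of_lt hst h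
  rw [integral_eq_lintegral_of_nonneg_ae f_nn f_mble.aestronglyMeasurable,
    lintegral_eq_lintegral_meas_lt μ f_nn f_mble,
    ← integral_toReal meas_antitone.measurable.aemeasurable
      (ae_of_all _ fun _ ↦ measure_lt_top _ _)]
  rfl

/-- The inverse of the change of variables `u ↦ u / √(t - 2νu)` on `[0, t / (2ν))`. -/
noncomputable def zInv (ν t y : ℝ) : ℝ := y * √(ν ^ 2 * y ^ 2 + t) - ν * y ^ 2

lemma lt_zInv_iff {ν t u y : ℝ} (hν : 0 ≤ ν) (hu : 0 ≤ u) (hy : 0 < y) :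
    u < zInv ν t y ↔ 2 * ν * u < t ∧ u / √(t - 2 * ν * u) < y := by
  have mul_sqrt (x : ℝ) : y * √x = √(y ^ 2 * x) := by rw [sqrt_mul (sq_nonneg y), sqrt_sq hy.le]
  have lt_zInv : u < zInv ν t y ↔ u ^ 2 < y ^ 2 * (t - 2 * ν * u) := by
    rw [zInv, lt_sub_iff_add_lt, mul_sqrt, lt_sqrt (by positivity)]
    have expand : (u + ν * y ^ 2) ^ 2 - y ^ 2 * (ν ^ 2 * y ^ 2 + t)
        = u ^ 2 - y ^ 2 * (t - 2 * ν * u) := by ring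
    constructor <;> intro h <;> linarith
  have div_lt (hlt : 2 * ν * u < t) :
      u / √(t - 2 * ν * u) < y ↔ u ^ 2 < y ^ 2 * (t - 2 * ν * u) := by
    rw [div_lt_iff₀ (sqrt_pos.2 (by linarith)), mul_sqrt, lt_sqrt hu]
  rw [lt_zInv]
  constructor
  · intro h
    have hlt : 2 * ν * u < t := by
      have := pos_of_mul_pos_right (h.trans_le' (sq_nonneg u)) (sq_nonneg y)
      linarith
    exact ⟨hlt, (div_lt hlt).2 h⟩
  · exact fun ⟨hlt, h⟩ ↦ (div_lt hlt).1 h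

lemma zInv_pos {ν t y : ℝ} (hν : 0 ≤ ν) (ht : 0 < t) (hy : 0 < y) : 0 < zInv ν t y :=
  (lt_zInv_iff hν le_rfl hy).2 ⟨by simpa using ht, by simpa using hy⟩

lemma setOf_lt_zInv_inter_Ioi {ν t u : ℝ} (hν : 0 ≤ ν) (hu : 0 ≤ u) :
    {y | u < zInv ν t y} ∩ Ioi 0 = if 2 * ν * u < t then Ioi (u / √(t - 2 * ν * u)) else ∅ := by
  ext y
  simp only [mem_inter_iff, mem_ofPred_eq, mem_Ioi]
  split_ifs with hlt
  · refine ⟨fun ⟨h, hy⟩ ↦ ((lt_zInv_iff hν hu hy).1 h).2, fun h ↦ ?_⟩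
    have hy : 0 < y := h.trans_le' (by positivity)
    exact ⟨(lt_zInv_iff hν hu hy).2 ⟨hlt, h⟩, hy⟩
  · simpa using fun h hy ↦ hlt ((lt_zInv_iff hν hu hy).1 h).1

/-- For `ν > 0`, `t > 0`, with `P(u) = 2 − 2Φ(u/√(t − 2νu))` for `0 < 2νu < t` and `P(u) = 0`
for `2νu ≥ t`, one has `∫₀^∞ P(u) du = 2 ∫₀^∞ (y√(ν²y² + t) − νy²) φ(y) dy`. -/
theorem tail_integral_eq (ν t : ℝ) (hν : 0 < ν) (ht : 0 < t) :
    ∫ u in Set.Ioi (0:ℝ),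
        (if 2 * ν * u < t then 2 - 2 * stdGaussianCDF (u / Real.sqrt (t - 2 * ν * u)) else 0)
      = 2 * ∫ y in Set.Ioi (0:ℝ),
          (y * Real.sqrt (ν ^ 2 * y ^ 2 + t) - ν * y ^ 2) * stdGaussianPDF y := by
  set μ := (gaussianReal 0 1).restrict (Ioi 0)
  have tail_eq : ∀ u ∈ Ioi (0 : ℝ),
      (if 2 * ν * u < t then 2 - 2 * stdGaussianCDF (u / √(t - 2 * ν * u)) else 0)
        = 2 * μ.real {y | u < zInv ν t y} := by
    intro u hu
    rw [measureReal_restrict_apply' measurableSet_Ioi, setOf_lt_zInv_inter_Ioi hν.le (le_of_lt hu)]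
    split_ifs
    · rw [← one_sub_stdGaussianCDF]; ring
    · simp
  have zInv_nonneg : 0 ≤ᵐ[μ] zInv ν t :=
    ae_restrict_of_forall_mem measurableSet_Ioi fun y hy ↦ (zInv_pos hν.le ht hy).le
  rw [setIntegral_congr_fun measurableSet_Ioi tail_eq, integral_const_mul,
    ← integral_eq_integral_measureReal_lt zInv_nonneg (by unfold zInv; fun_prop),
    setIntegral_gaussianReal _ one_ne_zero measurableSet_Ioi, stdGaussianPDF_eq_gaussianPDFReal]
  simp only [zInv, mul_comm (gaussianPDFReal 0 1 _)]
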